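/- Let H be d-dimensional with basis e₁,…,e_d, and define the transpose antiautomorphism t on Λ•H by t(v₁∧…∧v_k) = v_k∧…∧v₁ = (-1)^{k(k-1)/2} v₁∧…∧v_k, and the pairing (φ,ψ) = (t(φ) ∧ ψ)_top (coefficient of e₁∧…∧e_d). Then for any x ∈ H ⊕ H* acting on Λ•H via Clifford multiplication (exterior plus interior product), (x·φ, x·ψ) = Q(x)(φ,ψ), where Q(v,w) = w(v). -/

import Mathlib

/-!
A linear form `τ` on `⋀ V` that only sees the top degree kills every contraction `w⌋y`, since
contraction lowers the degree by one and `⋀^(dim V + 1) V = 0`. Consequently right contraction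
by `w` is adjoint to left contraction under `τ`. Expanding the pairing of `v ∧ φ + w⌋φ` with
`v ∧ ψ + w⌋ψ`, the `v ∧ v` and `w⌋w⌋` terms vanish and the Leibniz rule
`w⌋(v ∧ ψ) = w(v) ψ - v ∧ (w⌋ψ)` collapses the two cross terms to `w(v) (φ, ψ)`.
-/

open ExteriorAlgebra

namespace ExteriorAlgebra

open CliffordAlgebra

variable {R M : Type*} [CommRing R] [AddCommGroup M] [Module R M]

theorem exteriorPower_succ (n : ℕ) :
    ⋀[R]^(n + 1) M = LinearMap.range (ι R (M := M)) * ⋀[R]^n M :=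
  pow_succ' _ _

theorem ι_mul_mem_exteriorPower (m : M) {n : ℕ} {x : ExteriorAlgebra R M}
    (hx : x ∈ ⋀[R]^n M) : ι R m * x ∈ ⋀[R]^(n + 1) M :=
  exteriorPower_succ (R := R) (M := M) n ▸
    Submodule.mul_mem_mul (LinearMap.mem_range_self _ m) hx

theorem contractLeft_eq_zero_of_mem_exteriorPower_zero (w : Module.Dual R M)
    {z : ExteriorAlgebra R M} (hz : z ∈ ⋀[R]^0 M) : contractLeft w z = 0 := by
  rw [exteriorPower, pow_zero, Submodule.mem_one] at hz
  obtain ⟨r, rfl⟩ := hz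
  exact contractLeft_algebraMap _ w r

theorem contractLeft_mem_exteriorPower (w : Module.Dual R M) {n : ℕ}
    {z : ExteriorAlgebra R M} (hz : z ∈ ⋀[R]^(n + 1) M) : contractLeft w z ∈ ⋀[R]^n M := by
  have step : ∀ {k : ℕ} {z : ExteriorAlgebra R M}, z ∈ ⋀[R]^(k + 1) M →
      (∀ m, ∀ b ∈ ⋀[R]^k M, ι R m * contractLeft w b ∈ ⋀[R]^k M) →
      contractLeft w z ∈ ⋀[R]^k M := by
    intro k z hz hι
    rw [exteriorPower_succ] at hz
    induction hz using Submodule.mul_induction_on' with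
    | mem_mul_mem a ha b hb =>
      obtain ⟨m, rfl⟩ := ha
      rw [contractLeft_ι_mul]
      exact sub_mem (Submodule.smul_mem _ _ hb) (hι m b hb)
    | add x _ y _ hx hy => rw [map_add]; exact add_mem hx hy
  induction n generalizing z with
  | zero =>
    refine step hz fun m b hb => ?_
    rw [contractLeft_eq_zero_of_mem_exteriorPower_zero w hb, mul_zero]
    exact zero_mem _
  | succ n ih => exact step hz fun m b hb => ι_mul_mem_exteriorPower m (ih hb)

theorem ιMulti_eq_zero_of_finrank_lt {K V : Type*} [Field K] [AddCommGroup V] [Module K V]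
    [FiniteDimensional K V] {n : ℕ} (hn : Module.finrank K V < n) (u : Fin n → V) :
    ιMulti K n u = 0 :=
  (ιMulti K n).map_linearDependent u fun hu => by
    simpa using (hu.fintype_card_le_finrank.trans_lt hn).ne

theorem apply_contractLeft_eq_zero {K V : Type*} [Field K] [AddCommGroup V] [Module K V]
    [FiniteDimensional K V] (τ : ExteriorAlgebra K V →ₗ[K] K)
    (hτ : ∀ k ≠ Module.finrank K V, ∀ z ∈ ⋀[K]^k V, τ z = 0)
    (w : Module.Dual K V) (y : ExteriorAlgebra K V) : τ (contractLeft w y) = 0 := by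
  suffices τ ∘ₗ contractLeft w = 0 from LinearMap.congr_fun this y
  refine LinearMap.ext_on_range (ιMulti_span K V) fun ⟨n, u⟩ => ?_
  have hu : ιMulti K n u ∈ ⋀[K]^n V := ιMulti_range K n (Set.mem_range_self u)
  simp only [LinearMap.comp_apply, LinearMap.zero_apply]
  rcases n with _ | k
  · rw [contractLeft_eq_zero_of_mem_exteriorPower_zero w hu, map_zero]
  · by_cases hk : k = Module.finrank K V
    · rw [ιMulti_eq_zero_of_finrank_lt (by omega) u, map_zero, map_zero]
    · exact hτ k hk _ (contractLeft_mem_exteriorPower w hu)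

variable {N : Type*} [AddCommGroup N] [Module R N]

theorem apply_contractRight_mul (τ : ExteriorAlgebra R M →ₗ[R] N) {w : Module.Dual R M}
    (hτ : ∀ y, τ (contractLeft w y) = 0) (x y : ExteriorAlgebra R M) :
    τ (contractRight x w * y) = τ (x * contractLeft w y) := by
  induction x using CliffordAlgebra.right_induction generalizing y with
  | algebraMap r =>
    rw [contractRight_algebraMap, zero_mul, map_zero, ← Algebra.smul_def, map_smul, hτ,
      smul_zero]
  | add x₁ x₂ h₁ h₂ =>
    rw [map_add, LinearMap.add_apply, add_mul, add_mul, map_add, map_add, h₁, h₂]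
  | mul_ι m x ih =>
    rw [contractRight_mul_ι, sub_mul, smul_mul_assoc, map_sub, map_smul, mul_assoc, ih,
      contractLeft_ι_mul, mul_sub, map_sub, mul_smul_comm, map_smul, mul_assoc, sub_sub_cancel]

def cliffordSMul (v : M) (w : Module.Dual R M) (φ : ExteriorAlgebra R M) : ExteriorAlgebra R M :=
  ι R v * φ + contractLeft w φ

def pairing (τ : ExteriorAlgebra R M →ₗ[R] N) (φ ψ : ExteriorAlgebra R M) : N :=
  τ (reverse φ * ψ)

theorem pairing_cliffordSMul (τ : ExteriorAlgebra R M →ₗ[R] N) {w : Module.Dual R M}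
    (hτ : ∀ y, τ (contractLeft w y) = 0) (v : M) (φ ψ : ExteriorAlgebra R M) :
    pairing τ (cliffordSMul v w φ) (cliffordSMul v w ψ) = w v • pairing τ φ ψ := by
  set X := reverse (Q := 0) φ
  have hrev : reverse (cliffordSMul v w φ) = X * ι R v + contractRight X w := by
    rw [cliffordSMul, map_add, reverse.map_mul, reverse_ι, contractRight_eq, reverse_reverse]
  have hvv : X * ι R v * (ι R v * ψ) = 0 := by
    rw [mul_assoc, ← mul_assoc (ι R v), ι_sq_zero, zero_mul, mul_zero]
  have hwv : τ (contractRight X w * (ι R v * ψ))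
      = w v • τ (X * ψ) - τ (X * ι R v * contractLeft w ψ) := by
    rw [apply_contractRight_mul τ hτ, contractLeft_ι_mul, mul_sub, map_sub, mul_smul_comm,
      map_smul, mul_assoc]
  have hww : τ (contractRight X w * contractLeft w ψ) = 0 := by
    rw [apply_contractRight_mul τ hτ, contractLeft_contractLeft, mul_zero, map_zero]
  rw [pairing, pairing, hrev, cliffordSMul, mul_add, add_mul, add_mul, map_add, map_add, map_add,
    hvv, hwv, hww, map_zero]
  abel

end ExteriorAlgebra

theorem stmt9_general (H : Type*) [AddCommGroup H] [Module ℂ H] [FiniteDimensional ℂ H]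
    (d : ℕ) (hd : Module.finrank ℂ H = d)
    (τ : ExteriorAlgebra ℂ H →ₗ[ℂ] ℂ)
    (hτ0 : ∀ k : ℕ, k ≠ d → ∀ z ∈ ⋀[ℂ]^k H, τ z = 0)
    (v : H) (w : Module.Dual ℂ H) (φ ψ : ExteriorAlgebra ℂ H) :
    τ (CliffordAlgebra.reverse (Q := (0 : QuadraticForm ℂ H))
          (ι ℂ v * φ + CliffordAlgebra.contractLeft (Q := (0 : QuadraticForm ℂ H)) w φ) *
        (ι ℂ v * ψ + CliffordAlgebra.contractLeft (Q := (0 : QuadraticForm ℂ H)) w ψ))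
      = w v * τ (CliffordAlgebra.reverse (Q := (0 : QuadraticForm ℂ H)) φ * ψ) := by
  subst hd
  exact pairing_cliffordSMul τ (apply_contractLeft_eq_zero τ hτ0 w) v φ ψ

/-- With the transpose antiautomorphism `t` (reversal) on `Λ•H` and
the pairing `(φ,ψ) = (t(φ) ∧ ψ)_top` (coefficient of `e₁∧…∧e_d`), for any
`x = (v,w) ∈ H ⊕ H*` acting by Clifford multiplication `x·φ = v∧φ + i_w φ`,
one has `(x·φ, x·ψ) = Q(x)(φ,ψ)` where `Q(v,w) = w(v)`. -/
theorem stmt9 (H : Type*) [AddCommGroup H] [Module ℂ H] [FiniteDimensional ℂ H]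
    (d : ℕ) (hd : Module.finrank ℂ H = d) (e : Module.Basis (Fin d) ℂ H)
    (τ : ExteriorAlgebra ℂ H →ₗ[ℂ] ℂ)
    (hτ0 : ∀ k : ℕ, k ≠ d → ∀ z ∈ ⋀[ℂ]^k H, τ z = 0)
    (hτtop : τ (ExteriorAlgebra.ιMulti ℂ d (fun i => e i)) = 1)
    (v : H) (w : Module.Dual ℂ H) (φ ψ : ExteriorAlgebra ℂ H) :
    τ (CliffordAlgebra.reverse (Q := (0 : QuadraticForm ℂ H))
          (ι ℂ v * φ + CliffordAlgebra.contractLeft (Q := (0 : QuadraticForm ℂ H)) w φ) *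
        (ι ℂ v * ψ + CliffordAlgebra.contractLeft (Q := (0 : QuadraticForm ℂ H)) w ψ))
      = w v * τ (CliffordAlgebra.reverse (Q := (0 : QuadraticForm ℂ H)) φ * ψ) :=
  stmt9_general H d hd τ hτ0 v w φ ψ
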